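/- Let T = (V,E) be a finite tree and let w_e ∈ (−1,1) be a weight assigned to each edge e ∈ E. Define the symmetric matrix Σ indexed by V by Σ_vv = 1 for every v, and Σ_uv = the product of the weights of the edges on the unique path from u to v, for u ≠ v. Then det Σ = ∏_{e∈E} (1 − w_e²). In particular, 0 < det Σ ≤ 1, with det Σ < 1 whenever some edge weight is nonzero. -/

import Mathlib

/-! Remove a leaf `x` with neighbour `y`. Every path from `x` to another vertex starts with
the edge `xy`, so off the diagonal row `x` of `Σ` is `w_xy` times row `y`. Subtracting `w_xy`
times row `y` leaves the single entry `1 - w_xy²` in row `x`, hence `det Σ = (1 - w_xy²) det Σ'`,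
where `Σ'` is the matrix of the tree with `x` removed; induct on the number of vertices. -/

open SimpleGraph Finset

theorem Finset.prod_lt_one_of_mem {ι R : Type*} [CommRing R] [LinearOrder R]
    [IsStrictOrderedRing R] {s : Finset ι} {f : ι → R} (h0 : ∀ i ∈ s, 0 ≤ f i)
    (h1 : ∀ i ∈ s, f i ≤ 1) {i : ι} (hi : i ∈ s) (hlt : f i < 1) : ∏ j ∈ s, f j < 1 := by
  classical
  rw [← mul_prod_erase s f hi]
  exact mul_lt_one_of_nonneg_of_lt_one_left (h0 i hi) hlt
    (prod_le_one (fun j hj => h0 j (mem_of_mem_erase hj)) fun j hj => h1 j (mem_of_mem_erase hj))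

theorem one_sub_sq_mem_Ioc {R : Type*} [CommRing R] [LinearOrder R] [IsStrictOrderedRing R]
    {a : R} (ha : a ∈ Set.Ioo (-1) 1) : 1 - a ^ 2 ∈ Set.Ioc 0 1 := by
  obtain ⟨h₁, h₂⟩ := ha
  constructor <;> nlinarith

namespace Matrix

variable {n R : Type*} [Fintype n] [DecidableEq n] [CommRing R]

theorem det_eq_mul_det_submatrix_compl_of_row_eq_zero (A : Matrix n n R) {i : n}
    (h : ∀ j ≠ i, A i j = 0) :
    A.det = A i i * (A.submatrix ((↑) : ({i}ᶜ : Set n) → n) (↑)).det := by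
  let e := Equiv.Set.sumCompl ({i} : Set n)
  have hblock : A.submatrix e e =
      fromBlocks (A.submatrix ((↑) : ({i} : Set n) → n) (↑)) 0
        (A.submatrix ((↑) : ({i}ᶜ : Set n) → n) ((↑) : ({i} : Set n) → n))
        (A.submatrix ((↑) : ({i}ᶜ : Set n) → n) (↑)) := by
    ext (⟨a, ha⟩ | ⟨a, ha⟩) (⟨b, hb⟩ | ⟨b, hb⟩) <;>
      simp only [Set.mem_compl_iff, Set.mem_singleton_iff] at ha hb <;> simp_all [e]
  rw [← det_submatrix_equiv_self e, hblock, det_fromBlocks_zero₁₂, det_unique]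
  rfl

theorem det_eq_mul_det_submatrix_compl_of_row_eq_smul (A : Matrix n n R) {i k : n} (hik : i ≠ k)
    (c : R) (h : ∀ j ≠ i, A i j = c * A k j) :
    A.det = (A i i - c * A k i) * (A.submatrix ((↑) : ({i}ᶜ : Set n) → n) (↑)).det := by
  rw [← det_updateRow_add_smul_self A hik (-c),
    det_eq_mul_det_submatrix_compl_of_row_eq_zero _ (i := i)]
  · congr 2
    · simp [sub_eq_add_neg]
    · ext a b
      simp [updateRow_ne a.2]
  · intro j hj
    simp [h j hj]

end Matrix

namespace SimpleGraph

variable {V R : Type*} {G : SimpleGraph V}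

theorem prod_edgeFinset_eq_prod_incidenceFinset_mul_prod_induce [Fintype V] [DecidableEq V]
    [DecidableRel G.Adj] {M : Type*} [CommMonoid M] (f : Sym2 V → M) (x : V) :
    ∏ e ∈ G.edgeFinset, f e =
      (∏ e ∈ G.incidenceFinset x, f e) * ∏ e ∈ (G.induce {x}ᶜ).edgeFinset, f (e.map (↑)) := by
  have hrest : G.edgeFinset.filter (x ∉ ·) = (G.induce {x}ᶜ).edgeFinset.map
      (Function.Embedding.subtype (· ∈ ({x}ᶜ : Set V))).sym2Map := by
    rw [map_edgeFinset_induce]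
    ext e
    simp only [mem_filter, mem_edgeFinset, mem_inter, mem_sym2_iff, Set.mem_toFinset,
      Set.mem_compl_iff, Set.mem_singleton_iff, and_congr_right_iff]
    grind
  rw [← prod_filter_mul_prod_filter_not G.edgeFinset (x ∈ ·), incidenceFinset_eq_filter, hrest,
    prod_map]
  rfl

theorem incidenceFinset_eq_singleton_of_degree_eq_one [Fintype V] [DecidableEq V]
    [DecidableRel G.Adj] {x y : V} (hdeg : G.degree x = 1) (hxy : G.Adj x y) :
    G.incidenceFinset x = {s(x, y)} := by
  rw [← card_incidenceFinset_eq_degree, card_eq_one] at hdeg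
  obtain ⟨e, he⟩ := hdeg
  have hmem : s(x, y) ∈ G.incidenceFinset x :=
    (mem_incidenceFinset ..).2 ⟨hxy, Sym2.mem_mk_left x y⟩
  rw [he, mem_singleton] at hmem
  rw [he, hmem]

def IsPathProductMatrix [Monoid R] (G : SimpleGraph V) (w : Sym2 V → R) (A : Matrix V V R) :
    Prop :=
  ∀ u v : V, ∀ p : G.Walk u v, p.IsPath → A u v = (p.edges.map w).prod

namespace IsPathProductMatrix

section Monoid

variable [Monoid R] {w : Sym2 V → R} {A : Matrix V V R}

theorem apply_self (hA : G.IsPathProductMatrix w A) (v : V) : A v v = 1 := by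
  simpa using hA v v .nil .nil

theorem apply_of_adj (hA : G.IsPathProductMatrix w A) {u v : V} (h : G.Adj u v) :
    A u v = w s(u, v) := by
  simpa using hA u v (.cons h .nil) (by simp [h.ne])

theorem apply_eq_mul_of_unique_adj (hA : G.IsPathProductMatrix w A) (hG : G.Connected)
    {x y : V} (hy : ∀ z, G.Adj x z → z = y) {u : V} (hu : u ≠ x) :
    A x u = w s(x, y) * A y u := by
  obtain ⟨p, hp⟩ := hG.exists_isPath x u
  cases p with
  | nil => exact absurd rfl hu
  | cons h q =>
    obtain rfl := hy _ h
    rw [hA _ _ _ hp, hA _ _ _ hp.of_cons, Walk.edges_cons, List.map_cons, List.prod_cons]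

theorem induce (hA : G.IsPathProductMatrix w A) (s : Set V) :
    (G.induce s).IsPathProductMatrix (fun e => w (e.map (↑))) (A.submatrix (↑) (↑)) := by
  intro u v p hp
  have := hA _ _ _ (hp.map (f := (Embedding.induce s).toHom) Subtype.val_injective)
  rwa [Walk.edges_map, List.map_map] at this

end Monoid

variable [CommRing R] {w : Sym2 V → R} {A : Matrix V V R}

theorem det_eq_mul_det_submatrix_of_degree_eq_one [Fintype V] [DecidableEq V]
    [DecidableRel G.Adj] (hA : G.IsPathProductMatrix w A) (hG : G.Connected) {x y : V}
    (hdeg : G.degree x = 1) (hxy : G.Adj x y) :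
    A.det = (1 - w s(x, y) ^ 2) * (A.submatrix ((↑) : ({x}ᶜ : Set V) → V) (↑)).det := by
  have hy : ∀ z, G.Adj x z → z = y := fun z hz =>
    (degree_eq_one_iff_existsUnique_adj.mp hdeg).unique hz hxy
  rw [A.det_eq_mul_det_submatrix_compl_of_row_eq_smul hxy.ne (w s(x, y))
    fun u hu => hA.apply_eq_mul_of_unique_adj hG hy hu, hA.apply_self, hA.apply_of_adj hxy.symm,
    Sym2.eq_swap, sq]

end IsPathProductMatrix

theorem IsTree.det_eq_prod_of_isPathProductMatrix [Fintype V] [DecidableEq V]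
    [DecidableRel G.Adj] [CommRing R] {w : Sym2 V → R} {A : Matrix V V R} (hT : G.IsTree)
    (hA : G.IsPathProductMatrix w A) : A.det = ∏ e ∈ G.edgeFinset, (1 - w e ^ 2) := by
  refine Fintype.induction_subsingleton_or_nontrivial (P := fun V _ => ∀ [DecidableEq V]
    (G : SimpleGraph V) [DecidableRel G.Adj] (w : Sym2 V → R) (A : Matrix V V R), G.IsTree →
      G.IsPathProductMatrix w A → A.det = ∏ e ∈ G.edgeFinset, (1 - w e ^ 2)) V ?_ ?_ G w A hT hA
  · intro V _ _ _ G _ w A hT hA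
    have hA1 : A = 1 := by
      ext u v
      obtain rfl := Subsingleton.elim u v
      simp [hA.apply_self]
    have hE : G.edgeFinset = ∅ := by
      simp [edgeFinset_eq_empty, eq_bot_iff_forall_not_adj]
    rw [hA1, Matrix.det_one, hE, prod_empty]
  · intro V _ _ ih _ G _ w A hT hA
    obtain ⟨x, hdeg⟩ := hT.exists_vert_degree_one_of_nontrivial
    obtain ⟨y, hxy, -⟩ := degree_eq_one_iff_existsUnique_adj.mp hdeg
    have hT' : (G.induce {x}ᶜ).IsTree :=
      ⟨hT.connected.induce_compl_singleton_of_degree_eq_one hdeg, hT.isAcyclic.induce _⟩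
    rw [hA.det_eq_mul_det_submatrix_of_degree_eq_one hT.connected hdeg hxy,
      ih ({x}ᶜ : Set V) (Fintype.card_subtype_lt (x := x) (by simp)) _ _ _ hT' (hA.induce _),
      prod_edgeFinset_eq_prod_incidenceFinset_mul_prod_induce _ x,
      incidenceFinset_eq_singleton_of_degree_eq_one hdeg hxy, prod_singleton]

end SimpleGraph

/-- Let `T=(V,E)` be a finite tree with edge weights `w e ∈ (−1,1)`, and
let `Σ` be the matrix with unit diagonal and `Σ u v` the product of the weights of the
edges on the unique path from `u` to `v` (this is captured by requiring
`Σ u v = ∏ (weights along p)` for every path `p` from `u` to `v`; the empty path gives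
`Σ v v = 1`).  Then `det Σ = ∏_{e∈E} (1 − w_e²)`; in particular `0 < det Σ ≤ 1`, and
`det Σ < 1` whenever some edge weight is nonzero. -/
theorem stmt_4 {V : Type*} [Fintype V] [DecidableEq V] (G : SimpleGraph V)
    [DecidableRel G.Adj] (hT : G.IsTree)
    (w : Sym2 V → ℝ) (hw : ∀ e ∈ G.edgeSet, w e ∈ Set.Ioo (-1 : ℝ) 1)
    (Sig : Matrix V V ℝ)
    (hSig : ∀ u v : V, ∀ p : G.Walk u v, p.IsPath → Sig u v = (p.edges.map w).prod) :
    Sig.det = (∏ e ∈ G.edgeFinset, (1 - (w e) ^ 2)) ∧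
      0 < Sig.det ∧ Sig.det ≤ 1 ∧
      (∀ e ∈ G.edgeSet, w e ≠ 0 → Sig.det < 1) := by
  have hpos : ∀ e ∈ G.edgeFinset, 0 < 1 - w e ^ 2 := fun e he =>
    (one_sub_sq_mem_Ioc (hw e (mem_edgeFinset.mp he))).1
  have hle : ∀ e ∈ G.edgeFinset, 1 - w e ^ 2 ≤ 1 := fun e he =>
    (one_sub_sq_mem_Ioc (hw e (mem_edgeFinset.mp he))).2
  rw [hT.det_eq_prod_of_isPathProductMatrix hSig]
  exact ⟨rfl, prod_pos hpos, prod_le_one (fun e he => (hpos e he).le) hle,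
    fun e he hne => prod_lt_one_of_mem (fun e he => (hpos e he).le) hle (mem_edgeFinset.mpr he)
      (sub_lt_self 1 (sq_pos_of_ne_zero hne))⟩
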